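/- (Key inequality in the proof of Lemma B.13, case q_R = ξ1) Let p* ∈ [8/9, 1) and set ξ1 := 3p*/4 − √((3p*/4)² − p*/2). Define, for p ∈ (0, ξ1], f(p) := 2p(p* − ξ1)/(p* ξ1 (1−ξ1)) + p·log( (ξ1/(1−ξ1)) · ((1−p)/p) ) + 1 − p/ξ1 − (p* − p)/(p* (1−p)). Then f(p) > 0 for every p ∈ (0, ξ1]. -/
import Mathlib


/-- The smaller root of `3p·p* − p* − 2p² = 0`. -/
noncomputable def xi1 (pstar : ℝ) : ℝ :=
  3 * pstar / 4 - Real.sqrt ((3 * pstar / 4) ^ 2 - pstar / 2)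

set_option maxHeartbeats 1000000 in
/-- Key inequality in the proof of Lemma B.13, case `q_R = ξ1`: the function
`f(p) = 2p(p*−ξ1)/(p* ξ1 (1−ξ1)) + p log((ξ1/(1−ξ1))((1−p)/p)) + 1 − p/ξ1 − (p*−p)/(p*(1−p))`
is strictly positive on `(0, ξ1]`. -/
theorem f_positive_B13
    (pstar : ℝ) (hpstar : pstar ∈ Set.Ico (8 / 9 : ℝ) 1) :
    ∀ p ∈ Set.Ioc (0 : ℝ) (xi1 pstar),
      0 < 2 * p * (pstar - xi1 pstar) / (pstar * xi1 pstar * (1 - xi1 pstar))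
          + p * Real.log (xi1 pstar / (1 - xi1 pstar) * ((1 - p) / p))
          + 1 - p / xi1 pstar - (pstar - p) / (pstar * (1 - p)) := by
  obtain ⟨h1, h2⟩ := hpstar
  have hp0 : (0:ℝ) < pstar := by linarith
  obtain ⟨s, hs⟩ : ∃ y : ℝ, y = Real.sqrt ((3 * pstar / 4) ^ 2 - pstar / 2) := ⟨_, rfl⟩
  have hdisc : (0:ℝ) ≤ (3 * pstar / 4) ^ 2 - pstar / 2 := by nlinarith
  have hsq : s ^ 2 = (3 * pstar / 4) ^ 2 - pstar / 2 := by rw [hs]; exact Real.sq_sqrt hdisc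
  have hs0 : 0 ≤ s := hs ▸ Real.sqrt_nonneg _
  have hslt : s < 3 * pstar / 4 := by
    rw [hs]
    exact (Real.sqrt_lt' (by linarith)).mpr (by nlinarith)
  obtain ⟨x, hxd⟩ : ∃ y : ℝ, y = xi1 pstar := ⟨_, rfl⟩
  rw [← hxd]
  have hxval : x = 3 * pstar / 4 - s := by rw [hxd, hs]; rfl
  have hx0 : 0 < x := by rw [hxval]; linarith
  have hxle : x ≤ 3 * pstar / 4 := by rw [hxval]; linarith
  have hx34 : x < 3 / 4 := lt_of_le_of_lt hxle (by linarith)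
  have hx1 : x < 1 := by linarith
  have hxe : 2 * x ^ 2 - 3 * pstar * x + pstar = 0 := by
    rw [hxval]; linear_combination 2 * hsq
  have hx13 : 1 / 3 < x := by nlinarith
  -- positivity of pstar - 2x + pstar*x
  have hkey : (pstar - 2 * x + pstar * x) * (3 * x - 1) = 2 * x * (x - 1) ^ 2 := by
    linear_combination (-(1:ℝ) - x) * hxe
  have hx1sq : (0:ℝ) < (x - 1) ^ 2 := by nlinarith
  have ht1 : 0 < pstar - 2 * x + pstar * x := by nlinarith [mul_pos hx0 hx1sq]
  intro p hp
  obtain ⟨hp0', hpx⟩ := hp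
  have hp1 : p < 1 := lt_of_le_of_lt hpx hx1
  -- log term nonneg
  have hlog : 0 ≤ Real.log (x / (1 - x) * ((1 - p) / p)) := by
    apply Real.log_nonneg
    rw [div_mul_div_comm, le_div_iff₀ (mul_pos (by linarith) hp0')]
    nlinarith
  -- rational part positive
  have hB : 0 < (1 - p) * (pstar - 2 * x + pstar * x) + (1 - pstar) * x * (1 - x) := by
    have h1' : 0 < (1 - p) * (pstar - 2 * x + pstar * x) := by
      apply mul_pos (by linarith) ht1
    nlinarith [mul_pos hx0 (show (0:ℝ) < 1 - x by linarith)]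
  have hD : 0 < pstar * x * (1 - x) * (1 - p) :=
    mul_pos (mul_pos (mul_pos hp0 hx0) (by linarith)) (by linarith)
  have hg : 0 < 2 * p * (pstar - x) / (pstar * x * (1 - x)) + 1 - p / x
      - (pstar - p) / (pstar * (1 - p)) := by
    have heq : 2 * p * (pstar - x) / (pstar * x * (1 - x)) + 1 - p / x
        - (pstar - p) / (pstar * (1 - p))
        = p * ((1 - p) * (pstar - 2 * x + pstar * x) + (1 - pstar) * x * (1 - x))
          / (pstar * x * (1 - x) * (1 - p)) := by
      have hpne : pstar ≠ 0 := ne_of_gt hp0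
      have hxne : x ≠ 0 := ne_of_gt hx0
      have h1x : (1 - x) ≠ 0 := by linarith
      have h1p : (1 - p) ≠ 0 := by linarith
      field_simp
      ring
    rw [heq]
    exact div_pos (mul_pos hp0' hB) hD
  have hpl : 0 ≤ p * Real.log (x / (1 - x) * ((1 - p) / p)) :=
    mul_nonneg hp0'.le hlog
  linarith
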